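/- Consider the Lindley-type recursion W₁ = (c − D₁)⁺ and W_n = (W_{n−1} + c − D_n)⁺ for n ≥ 2, where D₁, D₂, … are i.i.d. nonnegative integer-valued random variables and c ≥ 0 is a constant with c ≤ E[D₁]. Then for every n ≥ 1, E[W_n] = ∑_{j=1}^n (1/j) · E[(j·c − ∑_{i=1}^j D_i)⁺]. -/

import Mathlib

/-!
Unrolling the Lindley recursion, `W n` is the running maximum `max (0, Xₙ, Xₙ + Xₙ₋₁, …)` of the
partial sums of the increments `Xᵢ = c - Dᵢ` taken in reverse order. An i.i.d. vector is
exchangeable, so `E[Wₙ] = E[Mₙ]` for the running maximum `Mₙ = max (S₀, …, Sₙ)` of the forward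
partial sums. Spitzer's combinatorial lemma: over the `m` cyclic rotations of a sequence of length
`m` with total `S`, the increments `Mₘ - Mₘ₋₁` add up to `S⁺` (if `S ≤ 0` each of them vanishes, if
`S > 0` they telescope). Averaging over the rotations, again by exchangeability,
`E[Mₘ] - E[Mₘ₋₁] = E[Sₘ⁺] / m`, and summing over `m` gives the identity.
-/

open MeasureTheory ProbabilityTheory Finset

section LinearOrder

variable {α : Type*} [LinearOrder α]

def windowMax (U : ℕ → α) (t : ℕ) : ℕ → α
  | 0 => U t
  | k + 1 => max (windowMax U t k) (U (t + (k + 1)))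

lemma le_windowMax (U : ℕ → α) (t : ℕ) {j k : ℕ} (hjk : j ≤ k) : U (t + j) ≤ windowMax U t k := by
  induction k with
  | zero => simp [Nat.le_zero.1 hjk, windowMax]
  | succ k ih =>
    rcases Nat.of_le_succ hjk with hjk | rfl
    · exact (ih hjk).trans (le_max_left _ _)
    · exact le_max_right _ _

lemma windowMax_succ' (U : ℕ → α) (t k : ℕ) :
    windowMax U t (k + 1) = max (U t) (windowMax U (t + 1) k) := by
  induction k with
  | zero => rfl
  | succ k ih => rw [windowMax, ih, windowMax, max_assoc, Nat.add_right_comm t 1, add_assoc t]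

lemma windowMax_congr {U V : ℕ → α} (t k : ℕ) (h : ∀ j ≤ k, U (t + j) = V (t + j)) :
    windowMax U t k = windowMax V t k := by
  induction k with
  | zero => exact h 0 le_rfl
  | succ k ih => rw [windowMax, windowMax, ih fun j hj => h j (hj.trans k.le_succ), h _ le_rfl]

end LinearOrder

section AddCommMonoid

variable {α : Type*} [AddCommMonoid α] [LinearOrder α]

def runMax (x : ℕ → α) (k : ℕ) : α := windowMax (fun j => ∑ i ∈ range j, x i) 0 k

@[simp] lemma runMax_zero (x : ℕ → α) : runMax x 0 = 0 := sum_range_zero x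

lemma runMax_congr {x y : ℕ → α} {k : ℕ} (h : ∀ i < k, x i = y i) : runMax x k = runMax y k :=
  windowMax_congr 0 k fun j hj => sum_congr rfl fun i hi => h i (by simp at hi; omega)

end AddCommMonoid

section AddCommGroup

variable {α : Type*} [AddCommGroup α] [LinearOrder α] [IsOrderedAddMonoid α]

lemma windowMax_add_period {U : ℕ → α} {m : ℕ} {S : α} (hU : ∀ j, U (j + m) = U j + S)
    (t k : ℕ) : windowMax U (t + m) k = windowMax U t k + S := by
  induction k with
  | zero => exact hU t
  | succ k ih => rw [windowMax, windowMax, ih, Nat.add_right_comm, hU, max_add_add_right]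

theorem sum_windowMax_succ_sub_windowMax {U : ℕ → α} {m : ℕ} {S : α}
    (hU : ∀ j, U (j + (m + 1)) = U j + S) :
    ∑ t ∈ range (m + 1), (windowMax U t (m + 1) - windowMax U t m) = max S 0 := by
  rcases le_or_gt S 0 with hS | hS
  · rw [max_eq_right hS]
    refine sum_eq_zero fun t _ => ?_
    have hlast : U (t + (m + 1)) ≤ windowMax U t m := by
      rw [hU]
      simpa using add_le_of_le_of_nonpos (le_windowMax U t (Nat.zero_le m)) hS
    rw [windowMax, max_eq_left hlast, sub_self]
  · have hfirst (t : ℕ) : U t ≤ windowMax U (t + 1) m := by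
      have hlast := le_windowMax U (t + 1) (le_refl m)
      rw [Nat.add_right_comm, add_assoc, hU] at hlast
      exact le_of_add_le_of_nonneg_left hlast hS.le
    simp_rw [windowMax_succ', max_eq_right (hfirst _)]
    rw [sum_range_sub (fun t => windowMax U t m), ← zero_add (m + 1),
      windowMax_add_period hU, max_eq_left hS.le, add_sub_cancel_left]

lemma runMax_shift (x : ℕ → α) (t k : ℕ) :
    runMax (fun i => x (t + i)) k
      = windowMax (fun j => ∑ i ∈ range j, x i) t k - ∑ i ∈ range t, x i := by
  induction k with
  | zero => simp [windowMax]
  | succ k ih => rw [runMax, windowMax, ← runMax, ih, windowMax, sum_range_add x t,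
      zero_add, ← max_sub_sub_right, add_sub_cancel_left]

lemma runMax_succ (x : ℕ → α) (k : ℕ) :
    runMax x (k + 1) = max (runMax (fun i => x (i + 1)) k + x 0) 0 := by
  rw [runMax, windowMax_succ']
  simp_rw [add_comm _ 1]
  rw [runMax_shift, sum_range_one, sub_add_cancel, sum_range_zero, max_comm]

theorem sum_runMax_shift_succ_sub {x : ℕ → α} {m : ℕ} (hx : ∀ i, x (i + (m + 1)) = x i) :
    ∑ t ∈ range (m + 1), (runMax (fun i => x (t + i)) (m + 1) - runMax (fun i => x (t + i)) m)
      = max (∑ i ∈ range (m + 1), x i) 0 := by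
  simp_rw [runMax_shift, sub_sub_sub_cancel_right]
  refine sum_windowMax_succ_sub_windowMax fun j => ?_
  rw [add_comm, sum_range_add, add_comm]
  simp_rw [add_comm (m + 1), hx]

theorem runMax_of_lindley {w x : ℕ → α} (h1 : w 1 = max (x 0) 0)
    (hstep : ∀ k, w (k + 2) = max (w (k + 1) + x (k + 1)) 0) (k : ℕ) :
    w (k + 1) = runMax (fun i => x (k - i)) (k + 1) := by
  induction k with
  | zero => simp [runMax_succ, h1]
  | succ k ih => simp [hstep, ih, runMax_succ (k := k + 1)]

end AddCommGroup

theorem identDistrib_comp_perm {Ω ι β : Type*} [MeasurableSpace Ω] {μ : Measure Ω}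
    [IsProbabilityMeasure μ] [Fintype ι] [MeasurableSpace β] {Y : ι → Ω → β}
    (hY : ∀ i, Measurable (Y i)) (hindep : iIndepFun Y μ)
    (hident : ∀ i j, μ.map (Y i) = μ.map (Y j)) (π : Equiv.Perm ι) :
    IdentDistrib (fun ω i => Y (π i) ω) (fun ω i => Y i ω) μ μ where
  aemeasurable_fst := (measurable_pi_lambda _ fun i => hY (π i)).aemeasurable
  aemeasurable_snd := (measurable_pi_lambda _ hY).aemeasurable
  map_eq := by
    rw [(iIndepFun_iff_map_fun_eq_pi_map fun i => (hY (π i)).aemeasurable).1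
        (hindep.precomp π.injective),
      (iIndepFun_iff_map_fun_eq_pi_map fun i => (hY i).aemeasurable).1 hindep]
    exact congrArg Measure.pi (funext fun i => hident (π i) i)

section Spitzer

open Fin.NatCast

variable {Ω : Type*} [MeasurableSpace Ω] {μ : Measure Ω} {X : ℕ → Ω → ℝ}

lemma measurable_runMax (hX : ∀ i, Measurable (X i)) (k : ℕ) :
    Measurable fun ω => runMax (X · ω) k := by
  have hsum (j : ℕ) : Measurable fun ω => ∑ i ∈ range j, X i ω :=
    Finset.measurable_sum _ fun i _ => hX i
  induction k with
  | zero => exact hsum 0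
  | succ k ih => exact ih.max (hsum _)

lemma integrable_runMax (hX : ∀ i, Integrable (X i) μ) (k : ℕ) :
    Integrable (fun ω => runMax (X · ω) k) μ := by
  have hsum (j : ℕ) : Integrable (fun ω => ∑ i ∈ range j, X i ω) μ :=
    integrable_finsetSum _ fun i _ => hX i
  induction k with
  | zero => exact hsum 0
  | succ k ih => exact ih.sup (hsum _)

variable [IsProbabilityMeasure μ]

lemma integral_runMax_perm (hX : ∀ i, Measurable (X i)) (hindep : iIndepFun X μ)
    (hident : ∀ i j, μ.map (X i) = μ.map (X j)) {m : ℕ} (π : Equiv.Perm (Fin (m + 1))) (k : ℕ) :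
    ∫ ω, runMax (fun i : ℕ => X (π i) ω) k ∂μ
      = ∫ ω, runMax (fun i : ℕ => X (i : Fin (m + 1)) ω) k ∂μ :=
  ((identDistrib_comp_perm (Y := fun i : Fin (m + 1) => X i) (fun i => hX i)
    (hindep.precomp Fin.val_injective) (fun i j => hident i j) π).comp
      (measurable_runMax (X := fun i (y : Fin (m + 1) → ℝ) => y i)
        (fun i => measurable_pi_apply (i : Fin (m + 1))) k)).integral_eq

theorem integral_runMax_rev (hX : ∀ i, Measurable (X i)) (hindep : iIndepFun X μ)
    (hident : ∀ i j, μ.map (X i) = μ.map (X j)) (k : ℕ) :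
    ∫ ω, runMax (fun i => X (k - i) ω) (k + 1) ∂μ = ∫ ω, runMax (X · ω) (k + 1) ∂μ :=
  calc ∫ ω, runMax (fun i => X (k - i) ω) (k + 1) ∂μ
      = ∫ ω, runMax (fun i : ℕ => X (Fin.revPerm (i : Fin (k + 1))) ω) (k + 1) ∂μ := by
        refine integral_congr_ae (ae_of_all _ fun ω => runMax_congr fun i hi => ?_)
        simp [Fin.val_rev, Nat.mod_eq_of_lt hi]
    _ = ∫ ω, runMax (fun i : ℕ => X (i : Fin (k + 1)) ω) (k + 1) ∂μ :=
        integral_runMax_perm hX hindep hident _ _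
    _ = ∫ ω, runMax (X · ω) (k + 1) ∂μ := by
        refine integral_congr_ae (ae_of_all _ fun ω => runMax_congr fun i hi => ?_)
        rw [Fin.val_cast_of_lt hi]

theorem integral_runMax_succ (hX : ∀ i, Measurable (X i)) (hindep : iIndepFun X μ)
    (hident : ∀ i j, μ.map (X i) = μ.map (X j)) (hint : ∀ i, Integrable (X i) μ) (m : ℕ) :
    ∫ ω, runMax (X · ω) (m + 1) ∂μ = ∫ ω, runMax (X · ω) m ∂μ
      + 1 / ((m + 1 : ℕ) : ℝ) * ∫ ω, max (∑ i ∈ range (m + 1), X i ω) 0 ∂μ := by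
  -- The shifts of the periodic extension `p ω` of `X 0 ω, …, X m ω` are its cyclic rotations.
  set p : Ω → ℕ → ℝ := fun ω i => X (i : Fin (m + 1)) ω
  have hp_lt {ω : Ω} {i : ℕ} (hi : i < m + 1) : p ω i = X i ω := by
    simp only [p, Fin.val_cast_of_lt hi]
  have hp_periodic (ω : Ω) (i : ℕ) : p ω (i + (m + 1)) = p ω i := by
    simp only [p]
    rw [Nat.cast_add, Fin.natCast_self, add_zero]
  have hp_int (t k : ℕ) : Integrable (fun ω => runMax (fun i => p ω (t + i)) k) μ :=
    integrable_runMax (fun i => hint _) k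
  have hrotate (t k : ℕ) :
      ∫ ω, runMax (fun i => p ω (t + i)) k ∂μ = ∫ ω, runMax (p ω) k ∂μ := by
    simpa only [p, Equiv.coe_addLeft, Nat.cast_add] using
      integral_runMax_perm hX hindep hident (Equiv.addLeft (t : Fin (m + 1))) k
  have hforward {k : ℕ} (hk : k ≤ m + 1) (ω : Ω) : runMax (p ω) k = runMax (X · ω) k :=
    runMax_congr fun i hi => hp_lt (hi.trans_le hk)
  have hcycle (ω : Ω) : ∑ t ∈ range (m + 1),
      (runMax (fun i => p ω (t + i)) (m + 1) - runMax (fun i => p ω (t + i)) m)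
        = max (∑ i ∈ range (m + 1), X i ω) 0 := by
    rw [sum_runMax_shift_succ_sub (hp_periodic ω)]
    exact congrArg (max · 0) (sum_congr rfl fun i hi => hp_lt (mem_range.1 hi))
  have hsum : ∫ ω, max (∑ i ∈ range (m + 1), X i ω) 0 ∂μ
      = (m + 1 : ℕ) * (∫ ω, runMax (X · ω) (m + 1) ∂μ - ∫ ω, runMax (X · ω) m ∂μ) := by
    simp_rw [← hcycle]
    rw [integral_finsetSum _ fun t _ => by exact (hp_int t _).sub (hp_int t _)]
    simp_rw [integral_sub (hp_int _ _) (hp_int _ _), hrotate, sum_const, card_range, nsmul_eq_mul,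
      hforward le_rfl, hforward m.le_succ]
  rw [hsum]
  field_simp
  ring

theorem integral_runMax_eq_sum (hX : ∀ i, Measurable (X i)) (hindep : iIndepFun X μ)
    (hident : ∀ i j, μ.map (X i) = μ.map (X j)) (hint : ∀ i, Integrable (X i) μ) (n : ℕ) :
    ∫ ω, runMax (X · ω) n ∂μ
      = ∑ j ∈ Icc 1 n, 1 / (j : ℝ) * ∫ ω, max (∑ i ∈ range j, X i ω) 0 ∂μ := by
  induction n with
  | zero => simp
  | succ n ih => rw [integral_runMax_succ hX hindep hident hint, ih, sum_Icc_succ_top (by omega)]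

end Spitzer

theorem kingman_identity_lindley_general
    {Ω : Type*} [MeasurableSpace Ω] (μ : Measure Ω) [IsProbabilityMeasure μ]
    (D : ℕ → Ω → ℝ)
    (hDmeas : ∀ i, Measurable (D i))
    (hindep : iIndepFun D μ)
    (hident : ∀ i j, Measure.map (D i) μ = Measure.map (D j) μ)
    (hDint : ∀ i, Integrable (D i) μ)
    (c : ℝ)
    (W : ℕ → Ω → ℝ)
    (hW1 : ∀ ω, W 1 ω = max (c - D 1 ω) 0)
    (hWn : ∀ n, 2 ≤ n → ∀ ω, W n ω = max (W (n - 1) ω + c - D n ω) 0) :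
    ∀ n, 1 ≤ n →
      ∫ ω, W n ω ∂μ
        = ∑ j ∈ Finset.Icc 1 n, (1 / (j : ℝ)) *
            ∫ ω, max ((j : ℝ) * c - ∑ i ∈ Finset.Icc 1 j, D i ω) 0 ∂μ := by
  intro n hn
  obtain ⟨k, rfl⟩ := Nat.exists_eq_add_of_le' hn
  set X : ℕ → Ω → ℝ := fun i ω => c - D (i + 1) ω
  have hsub : Measurable fun x : ℝ => c - x := measurable_const.sub measurable_id
  have hXmeas (i : ℕ) : Measurable (X i) := hsub.comp (hDmeas _)
  have hXindep : iIndepFun X μ :=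
    (hindep.precomp Nat.succ_injective).comp (fun _ => (c - ·)) fun _ => hsub
  have hXident (i j : ℕ) : μ.map (X i) = μ.map (X j) :=
    (IdentDistrib.comp ⟨(hDmeas _).aemeasurable, (hDmeas _).aemeasurable, hident _ _⟩ hsub).map_eq
  have hXint (i : ℕ) : Integrable (X i) μ := (integrable_const c).sub (hDint _)
  have hlindley (ω : Ω) : W (k + 1) ω = runMax (fun i => X (k - i) ω) (k + 1) :=
    runMax_of_lindley (w := (W · ω)) (x := (X · ω)) (hW1 ω)
      (fun j => by rw [hWn (j + 2) le_add_self, add_sub_assoc]; rfl) k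
  rw [integral_congr_ae (ae_of_all _ hlindley), integral_runMax_rev hXmeas hXindep hXident,
    integral_runMax_eq_sum hXmeas hXindep hXident hXint]
  refine sum_congr rfl fun j _ => ?_
  have hIcc (ω : Ω) : ∑ i ∈ Icc 1 j, D i ω = ∑ i ∈ range j, D (i + 1) ω := by
    rw [range_eq_Ico, sum_Ico_add' (D · ω), zero_add, Ico_add_one_right_eq_Icc]
  simp_rw [X, sum_sub_distrib, sum_const, card_range, nsmul_eq_mul, hIcc]

/-- Kingman's identity for the Lindley-type recursion
`W₁ = (c − D₁)⁺`, `Wₙ = (W_{n−1} + c − Dₙ)⁺`, where the `Dᵢ` (indexed from 1)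
are i.i.d. nonnegative integer-valued random variables and `0 ≤ c ≤ E[D₁]`:
for every `n ≥ 1`,
`E[Wₙ] = ∑_{j=1}^n (1/j) · E[(j·c − ∑_{i=1}^j Dᵢ)⁺]`. -/
theorem kingman_identity_lindley
    {Ω : Type*} [MeasurableSpace Ω] (μ : Measure Ω) [IsProbabilityMeasure μ]
    (D : ℕ → Ω → ℝ)
    (hDmeas : ∀ i, Measurable (D i))
    (hDnonnegInt : ∀ i ω, ∃ k : ℕ, D i ω = (k : ℝ))
    (hindep : iIndepFun D μ)
    (hident : ∀ i j, Measure.map (D i) μ = Measure.map (D j) μ)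
    (hDint : ∀ i, Integrable (D i) μ)
    (c : ℝ) (hc0 : 0 ≤ c) (hcle : c ≤ ∫ ω, D 1 ω ∂μ)
    (W : ℕ → Ω → ℝ)
    (hW1 : ∀ ω, W 1 ω = max (c - D 1 ω) 0)
    (hWn : ∀ n, 2 ≤ n → ∀ ω, W n ω = max (W (n - 1) ω + c - D n ω) 0) :
    ∀ n, 1 ≤ n →
      ∫ ω, W n ω ∂μ
        = ∑ j ∈ Finset.Icc 1 n, (1 / (j : ℝ)) *
            ∫ ω, max ((j : ℝ) * c - ∑ i ∈ Finset.Icc 1 j, D i ω) 0 ∂μ :=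
  kingman_identity_lindley_general μ D hDmeas hindep hident hDint c W hW1 hWn
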